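/- Let M = (S, ρ) be a matroid scheme and let I(M) = {x ∈ S : ρ(x) = |x|} be its independence poset. Then I(M) satisfies: (I1) I(M) is nonempty; (I2) if x ≤ y and y ∈ I(M), then x ∈ I(M); (I3) if x, y ∈ I(M) and |x| < |y|, then there is an atom a of S with a ≤ y, a ≰ x, and x∨a a nonempty subset of I(M); (I4) if x, y ∈ S, z is a maximal element of I(M)_{≤x} = {w ∈ I(M) : w ≤ x}, and z ≤ y, then x∨y ≠ ∅. -/

import Mathlib

/-!
Below `y` the poset is Boolean, so `x ≤ y` has a complement `c` with `y ∈ x ∨ c` and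
`|y| = |x| + |c|`; (M3) with the common lower bound `⊥` gives `ρ y ≤ ρ x + ρ c`, so
independence passes down (I2).

(I3) and (I4) rest on an absorption property: if `z` is maximal among the elements of rank
`ρ l` between `l` and `w`, then by (M3) every `u ≤ w` above `l` of the same rank lies below `z`.
For (I3), take such a `z` above `x` and the atom `b ≤ y` given by (M5) for `z` and `y`: an
element of `x ∨ b` has one more atom than `x` and cannot keep the rank of `x`, so it is
independent. For (I4), if `ρ z < ρ x`, take such a `z'` between `z` and `x` and an atom `a ≤ x`
outside `z'` from (M5): an element of `z ∨ a` below `x` either keeps the rank of `z`, and so lies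
below `z'`, or is independent, against the maximality of `z`. Hence `ρ x = ρ z`, and (M4)
applied to `x`, `y` and a maximal lower bound above `z` gives `x ∨ y ≠ ∅`.
-/

/-- The set of minimal upper bounds of `x` and `y` (denoted `x ∨ y` in the paper). -/
def mub {S : Type*} [PartialOrder S] (x y : S) : Set S :=
  {u | x ≤ u ∧ y ≤ u ∧ ∀ v, x ≤ v → y ≤ v → v ≤ u → v = u}

/-- The set of maximal lower bounds of `x` and `y` (denoted `x ∧ y` in the paper). -/
def mlb {S : Type*} [PartialOrder S] (x y : S) : Set S :=
  {l | l ≤ x ∧ l ≤ y ∧ ∀ m, m ≤ x → m ≤ y → l ≤ m → m = l}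

/-- The set of minimal upper bounds of a subset `T`. -/
def mubSet {S : Type*} [PartialOrder S] (T : Set S) : Set S :=
  {u | (∀ t ∈ T, t ≤ u) ∧ ∀ v, (∀ t ∈ T, t ≤ v) → v ≤ u → v = u}

/-- The number of atoms below `x`, i.e. `|x|`, the rank of `x` in a simplicial poset. -/
noncomputable def natRank {S : Type*} [PartialOrder S] [OrderBot S] (x : S) : ℕ :=
  Nat.card {a : S // IsAtom a ∧ a ≤ x}

/-- A finite bounded-below poset is simplicial if every lower interval is isomorphic to
the Boolean lattice of subsets of the set of atoms below. -/
def IsSimplicialPoset (S : Type*) [PartialOrder S] [OrderBot S] [Fintype S] : Prop :=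
  ∀ x : S, Nonempty (Set.Iic x ≃o Set {a : S // IsAtom a ∧ a ≤ x})

/-- A matroid scheme: a rank function `ρ` on a finite simplicial poset `S`
satisfying (M1)–(M5). -/
structure IsMatroidScheme {S : Type*} [PartialOrder S] [OrderBot S] [Fintype S]
    (ρ : S → ℕ) : Prop where
  simplicial : IsSimplicialPoset S
  M1 : ∀ x : S, ρ x ≤ natRank x
  M2 : ∀ ⦃x y : S⦄, x ≤ y → ρ x ≤ ρ y
  M3 : ∀ x y u l : S, u ∈ mub x y → l ∈ mlb x y → ρ u + ρ l ≤ ρ x + ρ y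
  M4 : ∀ x y l : S, l ∈ mlb x y → ρ x = ρ l → (mub x y).Nonempty
  M5 : ∀ x y : S, ρ x < ρ y →
    ∃ a : S, IsAtom a ∧ a ≤ y ∧ ¬ a ≤ x ∧ (mub x a).Nonempty

/-- `cl` is the closure operator of a matroid scheme `(S, ρ)`:
`cl x` is the greatest element above `x` of the same rank. -/
def IsClosureFun {S : Type*} [PartialOrder S] (ρ : S → ℕ) (cl : S → S) : Prop :=
  ∀ x : S, x ≤ cl x ∧ ρ (cl x) = ρ x ∧ ∀ y : S, x ≤ y → ρ y = ρ x → y ≤ cl x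

/-- The bases of a matroid scheme: the maximal independent elements. -/
def Bases {S : Type*} [PartialOrder S] [OrderBot S] (ρ : S → ℕ) : Set S :=
  {x | ρ x = natRank x ∧ ∀ w, ρ w = natRank w → x ≤ w → w = x}

/-- The circuits of a matroid scheme: the minimal dependent elements. -/
def Circuits {S : Type*} [PartialOrder S] [OrderBot S] (ρ : S → ℕ) : Set S :=
  {x | ρ x < natRank x ∧ ∀ y, ρ y < natRank y → y ≤ x → y = x}

/-- `c` is the complement `x ∖ a` of `a` in the Boolean lattice `S_{≤ x}`. -/
def IsComplementIn {S : Type*} [PartialOrder S] [OrderBot S] (c a x : S) : Prop :=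
  c ≤ x ∧ a ≤ x ∧ (∀ l : S, l ≤ c → l ≤ a → l = ⊥) ∧
    (∀ u : S, u ≤ x → c ≤ u → a ≤ u → u = x)

/-- The rank of a matroid scheme: the common value of `ρ` on maximal elements
(equal to the maximum value of `ρ`). -/
noncomputable def schemeRank {S : Type*} [Fintype S] (ρ : S → ℕ) : ℕ :=
  sSup (Set.range ρ)

/-- The Tutte polynomial of a matroid scheme, as a two-variable integer function. -/
noncomputable def tutte {S : Type*} [PartialOrder S] [OrderBot S] [Fintype S]
    (ρ : S → ℕ) (x y : ℤ) : ℤ :=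
  ∑ w : S, (x - 1) ^ (schemeRank ρ - ρ w) * (y - 1) ^ (natRank w - ρ w)

/-- An element of a poset is an order-atom if it covers a global minimum. -/
def OrdAtom {P : Type*} [PartialOrder P] (a : P) : Prop :=
  ∃ b : P, (∀ z : P, b ≤ z) ∧ b ⋖ a

/-- A partial order is a geometric lattice: it is bounded below, every pair has a least
upper bound and greatest lower bound, it is atomistic, and it is (upper) semimodular. -/
def IsGeomLatOrder (P : Type*) [PartialOrder P] : Prop :=
  (∃ b : P, ∀ x : P, b ≤ x) ∧
  (∀ x y : P, ∃ u : P, IsLUB {x, y} u) ∧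
  (∀ x y : P, ∃ l : P, IsGLB {x, y} l) ∧
  (∀ x : P, IsLUB {a : P | OrdAtom a ∧ a ≤ x} x) ∧
  (∀ x y m j : P, IsGLB {x, y} m → IsLUB {x, y} j → m ⋖ x → y ⋖ j)

/-- A geometric poset: a finite bounded-below poset with rank function `rk`
satisfying (G1) and (G2). -/
def IsGeometricPoset (P : Type*) [PartialOrder P] [OrderBot P] [Fintype P]
    (rk : P → ℕ) : Prop :=
  rk ⊥ = 0 ∧
  (∀ ⦃x y : P⦄, x ≤ y → rk x ≤ rk y) ∧
  (∀ x y : P, x ⋖ y → rk y = rk x + 1) ∧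
  (∀ m : P, IsMax m → IsGeomLatOrder (Set.Iic m)) ∧
  (∀ (x : P) (A : Set P), (∀ a ∈ A, IsAtom a) →
    ∀ y ∈ mubSet A, rk x < rk y → rk y = Nat.card A →
      ∃ a ∈ A, ¬ a ≤ x ∧ ∃ w : P, x ≤ w ∧ a ≤ w)

section FinitePoset

variable {S : Type*} [PartialOrder S] [Finite S]

lemma exists_mem_mub_le {x y w : S} (hx : x ≤ w) (hy : y ≤ w) : ∃ u ∈ mub x y, u ≤ w := by
  obtain ⟨u, hu⟩ := exists_minimal_of_wellFoundedLT (fun v => x ≤ v ∧ y ≤ v ∧ v ≤ w)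
    ⟨w, hx, hy, le_rfl⟩
  exact ⟨u, ⟨hu.1.1, hu.1.2.1, fun v hxv hyv hvu =>
    le_antisymm hvu (hu.2 ⟨hxv, hyv, hvu.trans hu.1.2.2⟩ hvu)⟩, hu.1.2.2⟩

lemma exists_mem_mlb_ge {x y l : S} (hx : l ≤ x) (hy : l ≤ y) : ∃ m ∈ mlb x y, l ≤ m := by
  obtain ⟨m, hm⟩ := exists_maximal_of_wellFoundedGT (fun v => v ≤ x ∧ v ≤ y ∧ l ≤ v)
    ⟨l, hx, hy, le_rfl⟩
  exact ⟨m, ⟨hm.1.1, hm.1.2.1, fun v hvx hvy hmv =>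
    le_antisymm (hm.2 ⟨hvx, hvy, hm.1.2.2.trans hmv⟩ hmv) hmv⟩, hm.1.2.2⟩

end FinitePoset

section SimplicialPoset

variable {S : Type*} [PartialOrder S] [OrderBot S]

lemma natRank_bot : natRank (⊥ : S) = 0 :=
  have : IsEmpty {a : S // IsAtom a ∧ a ≤ ⊥} := ⟨fun a => a.2.1.1 (le_bot_iff.mp a.2.2)⟩
  Nat.card_of_isEmpty

lemma IsAtom.natRank_eq_one {a : S} (ha : IsAtom a) : natRank a = 1 :=
  have : Unique {b : S // IsAtom b ∧ b ≤ a} :=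
    ⟨⟨⟨a, ha, le_rfl⟩⟩, fun b => Subtype.ext ((ha.le_iff.mp b.2.2).resolve_left b.2.1.1)⟩
  Nat.card_unique

lemma IsComplementIn.mem_mub {c a x : S} (h : IsComplementIn c a x) : x ∈ mub c a :=
  ⟨h.1, h.2.1, fun v hcv hav hvx => h.2.2.2 v hvx hcv hav⟩

lemma isComplementIn_of_mem_mub_of_isAtom {x a u : S} (ha : IsAtom a) (hax : ¬ a ≤ x)
    (hu : u ∈ mub x a) : IsComplementIn x a u :=
  ⟨hu.1, hu.2.1, fun _ hlx hla => (ha.le_iff.mp hla).resolve_right (fun h => hax (h ▸ hlx)),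
    fun v hvu hxv hav => hu.2.2 v hxv hav hvu⟩

/-- Atoms of `S` below `x` correspond to atoms of `Set α` below `e x`, i.e. to points of `e x`. -/
lemma natRank_eq_ncard {α : Type*} {u x : S} (e : Set.Iic u ≃o Set α) (hx : x ≤ u) :
    natRank x = (e ⟨x, hx⟩).ncard := by
  let f : e ⟨x, hx⟩ → {a : S // IsAtom a ∧ a ≤ x} := fun t =>
    ⟨e.symm {t.1}, ((e.symm.isAtom_iff _).2 (Set.isAtom_singleton t.1)).of_isAtom_coe_Iic,
      e.symm_apply_le.2 (Set.singleton_subset_iff.2 t.2)⟩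
  have hf : f.Bijective := by
    refine ⟨fun t t' htt' => Subtype.ext <| Set.singleton_injective <|
      e.symm.injective (Subtype.ext (congrArg Subtype.val htt' :)), ?_⟩
    rintro ⟨a, ha, hax⟩
    obtain ⟨t, ht⟩ := Set.isAtom_iff.1 ((e.isAtom_iff _).2 (ha.Iic (hax.trans hx)))
    have hta : t ∈ e ⟨a, hax.trans hx⟩ := ht ▸ rfl
    have htx : t ∈ e ⟨x, hx⟩ := e.monotone (Subtype.mk_le_mk.2 hax) hta
    exact ⟨⟨t, htx⟩, Subtype.ext (congrArg Subtype.val (e.symm_apply_eq.2 ht.symm) :)⟩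
  exact (Nat.card_eq_of_bijective f hf).symm.trans (Nat.card_coe_set_eq _)

variable [Fintype S]

theorem IsSimplicialPoset.natRank_eq_add (hs : IsSimplicialPoset S) {c a x : S}
    (h : IsComplementIn c a x) : natRank x = natRank c + natRank a := by
  obtain ⟨hcx, hax, hdisj, hsup⟩ := h
  obtain ⟨e⟩ := hs x
  set C := e ⟨c, hcx⟩
  set A := e ⟨a, hax⟩
  have hCA_disjoint : Disjoint C A := by
    rw [Set.disjoint_iff_inter_eq_empty, ← e.apply_symm_apply (C ∩ A)]
    refine (map_eq_bot_iff e).2 (Subtype.ext (hdisj _ ?_ ?_))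
    · exact e.symm_apply_le.2 Set.inter_subset_left
    · exact e.symm_apply_le.2 Set.inter_subset_right
  have hCA_union : C ∪ A = Set.univ := by
    rw [← e.apply_symm_apply (C ∪ A)]
    refine (map_eq_top_iff e).2 (Subtype.ext (hsup _ (e.symm _).2 ?_ ?_))
    · exact show (⟨c, hcx⟩ : Set.Iic x) ≤ _ from e.le_symm_apply.2 Set.subset_union_left
    · exact show (⟨a, hax⟩ : Set.Iic x) ≤ _ from e.le_symm_apply.2 Set.subset_union_right
  have hx : e ⟨x, le_rfl⟩ = Set.univ := (map_eq_top_iff e).2 rfl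
  rw [natRank_eq_ncard e le_rfl, natRank_eq_ncard e hcx, natRank_eq_ncard e hax, hx, ← hCA_union,
    Set.ncard_union_eq hCA_disjoint]

theorem IsSimplicialPoset.exists_isComplementIn (hs : IsSimplicialPoset S) {a x : S}
    (hax : a ≤ x) : ∃ c, IsComplementIn c a x := by
  obtain ⟨e⟩ := hs x
  set A := e ⟨a, hax⟩
  refine ⟨e.symm Aᶜ, (e.symm Aᶜ).2, hax, fun l hlc hla => ?_, fun v hvx hcv hav => ?_⟩
  · have hl : e ⟨l, hla.trans hax⟩ ≤ Aᶜ ⊓ A :=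
      le_inf (e.le_symm_apply.1 hlc) (e.monotone (Subtype.mk_le_mk.2 hla))
    rw [compl_inf_self, le_bot_iff, map_eq_bot_iff] at hl
    exact congrArg Subtype.val hl
  · have hv : Aᶜ ⊔ A ≤ e ⟨v, hvx⟩ :=
      sup_le (e.symm_apply_le.1 hcv) (e.monotone (Subtype.mk_le_mk.2 hav))
    rw [compl_sup_eq_top, top_le_iff, map_eq_top_iff] at hv
    exact congrArg Subtype.val hv

theorem IsSimplicialPoset.natRank_eq_add_one_of_mem_mub (hs : IsSimplicialPoset S) {x a u : S}
    (ha : IsAtom a) (hax : ¬ a ≤ x) (hu : u ∈ mub x a) : natRank u = natRank x + 1 := by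
  rw [hs.natRank_eq_add (isComplementIn_of_mem_mub_of_isAtom ha hax hu), ha.natRank_eq_one]

end SimplicialPoset

namespace IsMatroidScheme

variable {S : Type*} [PartialOrder S] [OrderBot S] [Fintype S] {ρ : S → ℕ}

lemma rho_bot (h : IsMatroidScheme ρ) : ρ ⊥ = 0 :=
  Nat.le_zero.1 (natRank_bot (S := S) ▸ h.M1 ⊥)

lemma rho_add_le (h : IsMatroidScheme ρ) {x y u l : S} (hlx : l ≤ x) (hly : l ≤ y)
    (hu : u ∈ mub x y) : ρ u + ρ l ≤ ρ x + ρ y := by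
  obtain ⟨m, hm, hlm⟩ := exists_mem_mlb_ge hlx hly
  exact (Nat.add_le_add_left (h.M2 hlm) _).trans (h.M3 x y u m hu hm)

lemma mub_nonempty_of_rho_eq (h : IsMatroidScheme ρ) {x y l : S} (hlx : l ≤ x) (hly : l ≤ y)
    (hρ : ρ x = ρ l) : (mub x y).Nonempty := by
  obtain ⟨m, hm, hlm⟩ := exists_mem_mlb_ge hlx hly
  exact h.M4 x y m hm (le_antisymm (hρ ▸ h.M2 hlm) (h.M2 hm.1))

lemma rho_le_add_one_of_mem_mub_atom (h : IsMatroidScheme ρ) {x a u : S} (ha : IsAtom a)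
    (hu : u ∈ mub x a) : ρ u ≤ ρ x + 1 := by
  have hu' := h.rho_add_le bot_le bot_le hu
  have ha' := ha.natRank_eq_one ▸ h.M1 a
  omega

lemma le_of_maximal_of_rho_eq (h : IsMatroidScheme ρ) {l z u w : S} (hlz : l ≤ z) (hlu : l ≤ u)
    (hz : ρ z = ρ l) (hu : ρ u = ρ l) (hzw : z ≤ w) (huw : u ≤ w)
    (hmax : ∀ v, z ≤ v → v ≤ w → ρ v = ρ l → v ≤ z) : u ≤ z := by
  obtain ⟨v, hv, hvw⟩ := exists_mem_mub_le hzw huw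
  have hρv : ρ v = ρ l := by
    have := h.rho_add_le hlz hlu hv
    have := h.M2 hv.1
    omega
  exact hv.2.1.trans (hmax v hv.1 hvw hρv)

theorem rho_eq_natRank_of_le (h : IsMatroidScheme ρ) {x y : S} (hxy : x ≤ y)
    (hy : ρ y = natRank y) : ρ x = natRank x := by
  obtain ⟨c, hc⟩ := h.simplicial.exists_isComplementIn hxy
  have hρ := h.rho_add_le bot_le bot_le hc.mem_mub
  have hrank := h.simplicial.natRank_eq_add hc
  have := h.M1 x
  have := h.M1 c
  omega

theorem exists_augmentation (h : IsMatroidScheme ρ) {x y : S} (hx : ρ x = natRank x)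
    (hy : ρ y = natRank y) (hlt : natRank x < natRank y) :
    ∃ a : S, IsAtom a ∧ a ≤ y ∧ ¬ a ≤ x ∧ (mub x a).Nonempty ∧
      mub x a ⊆ {z : S | ρ z = natRank z} := by
  obtain ⟨z, hxz, hz⟩ :=
    Finite.exists_le_maximal (p := fun w => x ≤ w ∧ ρ w = ρ x) ⟨le_rfl, rfl⟩
  obtain ⟨b, hb, hby, hbz, w, hw⟩ := h.M5 z y (by rw [hz.1.2, hx, hy]; exact hlt)
  obtain ⟨u₀, hu₀, -⟩ := exists_mem_mub_le (hxz.trans hw.1) hw.2.1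
  have hbx : ¬ b ≤ x := fun hbx => hbz (hbx.trans hxz)
  refine ⟨b, hb, hby, hbx, ⟨u₀, hu₀⟩, fun u hu => ?_⟩
  have hρu : ρ u ≠ ρ x := fun hρu => by
    obtain ⟨v, hv⟩ := h.mub_nonempty_of_rho_eq hxz hu.1 hz.1.2
    refine hbz (hu.2.1.trans (h.le_of_maximal_of_rho_eq hxz hu.1 hz.1.2 hρu hv.1 hv.2.1 ?_))
    exact fun v hzv _ hρv => hz.2 ⟨hxz.trans hzv, hρv⟩ hzv
  have hrank := h.simplicial.natRank_eq_add_one_of_mem_mub hb hbx hu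
  have := h.M1 u
  have := h.M2 hu.1
  change ρ u = natRank u
  omega

theorem rho_eq_of_maximal_indep (h : IsMatroidScheme ρ) {x z : S} (hz : ρ z = natRank z)
    (hzx : z ≤ x) (hmax : ∀ w : S, ρ w = natRank w → w ≤ x → z ≤ w → w = z) : ρ x = ρ z := by
  by_contra hne
  obtain ⟨z', hzz', hz'⟩ :=
    Finite.exists_le_maximal (p := fun w => z ≤ w ∧ w ≤ x ∧ ρ w = ρ z) ⟨le_rfl, hzx, rfl⟩
  obtain ⟨a, ha, hax, haz', -⟩ :=
    h.M5 z' x (hz'.1.2.2 ▸ lt_of_le_of_ne (h.M2 hzx) (Ne.symm hne))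
  obtain ⟨u, hu, hux⟩ := exists_mem_mub_le hzx hax
  have haz : ¬ a ≤ z := fun haz => haz' (haz.trans hzz')
  apply haz'
  by_cases hρu : ρ u = ρ z
  · refine hu.2.1.trans (h.le_of_maximal_of_rho_eq hzz' hu.1 hz'.1.2.2 hρu hz'.1.2.1 hux ?_)
    exact fun v hz'v hvx hρv => hz'.2 ⟨hzz'.trans hz'v, hvx, hρv⟩ hz'v
  · have hu_indep : ρ u = natRank u := by
      have := h.rho_le_add_one_of_mem_mub_atom ha hu
      have := h.M2 hu.1
      rw [h.simplicial.natRank_eq_add_one_of_mem_mub ha haz hu]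
      omega
    exact hu.2.1.trans ((hmax u hu_indep hux hu.1).le.trans hzz')

end IsMatroidScheme

/-- Theorem 6.2 (forward direction): the independence poset
`I(M) = {x : ρ x = |x|}` of a matroid scheme satisfies (I1)–(I4). -/
theorem statement6 {S : Type*} [PartialOrder S] [OrderBot S] [Fintype S]
    (ρ : S → ℕ) (h : IsMatroidScheme ρ) :
    ({x : S | ρ x = natRank x}).Nonempty ∧
    (∀ x y : S, x ≤ y → ρ y = natRank y → ρ x = natRank x) ∧
    (∀ x y : S, ρ x = natRank x → ρ y = natRank y → natRank x < natRank y →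
      ∃ a : S, IsAtom a ∧ a ≤ y ∧ ¬ a ≤ x ∧ (mub x a).Nonempty ∧
        mub x a ⊆ {z : S | ρ z = natRank z}) ∧
    (∀ x y z : S, ρ z = natRank z → z ≤ x →
      (∀ w : S, ρ w = natRank w → w ≤ x → z ≤ w → w = z) → z ≤ y →
      (mub x y).Nonempty) :=
  ⟨⟨⊥, h.rho_bot.trans natRank_bot.symm⟩,
    fun _ _ hxy hy => h.rho_eq_natRank_of_le hxy hy,
    fun _ _ hx hy hlt => h.exists_augmentation hx hy hlt,
    fun _ _ _ hz hzx hmax hzy =>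
      h.mub_nonempty_of_rho_eq hzx hzy (h.rho_eq_of_maximal_indep hz hzx hmax)⟩
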